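/- The 1-dimensional Hausdorff measure of the Julia set E = ⋂_{k≥1} S_k satisfies H¹(E) ≤ 4. -/

import Mathlib

open Complex Metric Set Filter MeasureTheory
open scoped ENNReal NNReal Topology

/-!
From time `M k` to time `M (k + 1)` the dynamics is `w ↦ w ^ N + c` with `N = 2 ^ (m + 1)`, so a
point of `E` is recovered from its orbit by applying inverse branches. On the disc `D̄(0, 2)` each
of the `N` branches `ψ` of `u ↦ (u - c) ^ (1 / N)` maps the disc into itself and has derivative
`ψ u / (N (u - c))`, of modulus at most `2 / (2 N) = 1 / N` since `|c| ≥ 4`. Hence the depth-`k`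
compositions cover `E` by `∏ Nᵢ` sets of diameter at most `4 / ∏ Nᵢ`.
-/

section Branches

variable {X : Type*} [EMetricSpace X] {E K : Set X} {π : ℕ → X → X} {G : ℕ → Finset (X → X)}
  {L : ℕ → ℝ≥0} {d : ℝ}

open Finset in
theorem exists_finset_lipschitzOnWith_comp (hGK : ∀ k, ∀ g ∈ G k, MapsTo g K K)
    (hGL : ∀ k, ∀ g ∈ G k, LipschitzOnWith (L k) g K)
    (hG : ∀ k, (#(G k) : ℝ≥0) * L k ^ d ≤ 1)
    (hπ0 : ∀ z ∈ E, π 0 z = z) (hπ : ∀ k, ∀ z ∈ E, ∃ g ∈ G k, π k z = g (π (k + 1) z)) (k : ℕ) :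
    ∃ F : Finset (X → X), (#F : ℝ≥0) * (∏ i ∈ range k, L i) ^ d ≤ 1 ∧
      (∀ f ∈ F, LipschitzOnWith (∏ i ∈ range k, L i) f K) ∧ ∀ z ∈ E, ∃ f ∈ F, z = f (π k z) := by
  classical
  induction k with
  | zero =>
    refine ⟨{id}, by simp, by simpa using LipschitzWith.id.lipschitzOnWith, fun z hz => ?_⟩
    exact ⟨id, mem_singleton_self _, (hπ0 z hz).symm⟩
  | succ k ih =>
    obtain ⟨F, hFcard, hFL, hFE⟩ := ih
    refine ⟨(F ×ˢ G k).image fun p => p.1 ∘ p.2, ?_, ?_, ?_⟩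
    · calc (#((F ×ˢ G k).image fun p => p.1 ∘ p.2) : ℝ≥0) * (∏ i ∈ range (k + 1), L i) ^ d
          ≤ (#F * #(G k) : ℝ≥0) * ((∏ i ∈ range k, L i) ^ d * L k ^ d) := by
            rw [prod_range_succ, NNReal.mul_rpow]
            gcongr
            exact_mod_cast card_image_le.trans (card_product F (G k)).le
        _ = (#F * (∏ i ∈ range k, L i) ^ d) * (#(G k) * L k ^ d) := by ring
        _ ≤ 1 := mul_le_one' hFcard (hG k)
    · simp only [Finset.mem_image, mem_product, Prod.exists]
      rintro _ ⟨f, g, ⟨hf, hg⟩, rfl⟩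
      rw [prod_range_succ]
      exact (hFL f hf).comp (hGL k g hg) (hGK k g hg)
    · intro z hz
      obtain ⟨f, hf, hzf⟩ := hFE z hz
      obtain ⟨g, hg, hfg⟩ := hπ k z hz
      refine ⟨f ∘ g, Finset.mem_image.2 ⟨(f, g), mem_product.2 ⟨hf, hg⟩, rfl⟩, ?_⟩
      rw [Function.comp_apply, ← hfg]
      exact hzf

open Finset in
theorem hausdorffMeasure_le_ediam_rpow_of_branches [MeasurableSpace X] [BorelSpace X]
    (hK : ediam K ≠ ⊤) (hd : 0 ≤ d) (hGK : ∀ k, ∀ g ∈ G k, MapsTo g K K)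
    (hGL : ∀ k, ∀ g ∈ G k, LipschitzOnWith (L k) g K)
    (hG : ∀ k, (#(G k) : ℝ≥0) * L k ^ d ≤ 1)
    (hL : Tendsto (fun k => ∏ i ∈ range k, L i) atTop (𝓝 0))
    (hπ0 : ∀ z ∈ E, π 0 z = z) (hπK : ∀ k, ∀ z ∈ E, π (k + 1) z ∈ K)
    (hπ : ∀ k, ∀ z ∈ E, ∃ g ∈ G k, π k z = g (π (k + 1) z)) :
    μH[d] E ≤ ediam K ^ d := by
  have hπK' : ∀ k, ∀ z ∈ E, π k z ∈ K := by
    rintro (_ | k) z hz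
    · obtain ⟨g, hg, hgz⟩ := hπ 0 z hz
      exact hgz ▸ hGK 0 g hg (hπK 0 z hz)
    · exact hπK k z hz
  choose F hFcard hFL hFE using exists_finset_lipschitzOnWith_comp hGK hGL hG hπ0 hπ
  have hr : Tendsto (fun k => ((∏ i ∈ range k, L i : ℝ≥0) : ℝ≥0∞) * ediam K) atTop (𝓝 0) := by
    simpa using ENNReal.Tendsto.mul_const (ENNReal.tendsto_coe.2 hL) (Or.inr hK)
  have hdiam : ∀ k, ∀ f ∈ F k, ediam (f '' K) ≤ (∏ i ∈ range k, L i : ℝ≥0) * ediam K :=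
    fun k f hf => by simpa using (hFL k f hf).holderOnWith.ediam_image_le
  refine (Measure.hausdorffMeasure_le_liminf_sum d E _ hr (fun k (f : F k) => (f : X → X) '' K)
    (Eventually.of_forall fun k f => hdiam k f f.2) (Eventually.of_forall fun k z hz => ?_)).trans
    (liminf_le_of_frequently_le' (Frequently.of_forall fun k => ?_))
  · obtain ⟨f, hf, hzf⟩ := hFE k z hz
    exact mem_iUnion.2 ⟨⟨f, hf⟩, hzf ▸ mem_image_of_mem f (hπK' k z hz)⟩
  · calc ∑ f : F k, ediam ((f : X → X) '' K) ^ d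
        ≤ ∑ _f : F k, (((∏ i ∈ range k, L i : ℝ≥0) : ℝ≥0∞) * ediam K) ^ d :=
          Finset.sum_le_sum fun f _ => ENNReal.rpow_le_rpow (hdiam k f f.2) hd
      _ = ((#(F k) * (∏ i ∈ range k, L i) ^ d : ℝ≥0) : ℝ≥0∞) * ediam K ^ d := by
          rw [Finset.sum_const, Finset.card_univ, Fintype.card_coe, nsmul_eq_mul,
            ENNReal.mul_rpow_of_nonneg _ _ hd, ENNReal.coe_mul, ENNReal.coe_rpow_of_nonneg _ hd,
            mul_assoc, ENNReal.coe_natCast]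
      _ ≤ ediam K ^ d := by
          refine mul_le_of_le_one_left zero_le ?_
          exact_mod_cast hFcard k

end Branches

section RootBranches

variable {N : ℕ} {c u : ℂ} {R : ℝ}

/-- The `j`-th branch of `u ↦ (u - c) ^ (1 / N)`, written through `1 - u / c` so that the branch
cut of `cpow` is avoided when `|u| < |c|`. -/
noncomputable def rootBranch (N : ℕ) (c : ℂ) (j : ℕ) (u : ℂ) : ℂ :=
  exp (2 * Real.pi * I / N) ^ j * (-c) ^ (N⁻¹ : ℂ) * (1 - u / c) ^ (N⁻¹ : ℂ)

open Classical in
noncomputable def rootBranches (N : ℕ) (c : ℂ) : Finset (ℂ → ℂ) :=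
  (Finset.range N).image (rootBranch N c)

open Classical in
lemma card_rootBranches_mul_inv_le_one : ((rootBranches N c).card : ℝ≥0) * (N : ℝ≥0)⁻¹ ≤ 1 := by
  refine (mul_le_mul_of_nonneg_right ?_ zero_le).trans mul_inv_le_one
  exact_mod_cast Finset.card_image_le.trans (Finset.card_range N).le

lemma rootBranch_pow (hN : N ≠ 0) (hc : c ≠ 0) (j : ℕ) (u : ℂ) :
    rootBranch N c j u ^ N = u - c := by
  have hζ : exp (2 * Real.pi * I / N) ^ N = 1 := (isPrimitiveRoot_exp N hN).pow_eq_one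
  rw [rootBranch, mul_pow, mul_pow, ← pow_mul, mul_comm j, pow_mul, hζ, one_pow, one_mul,
    cpow_nat_inv_pow _ hN, cpow_nat_inv_pow _ hN]
  field_simp
  ring

open Classical in
lemma exists_mem_rootBranches_eq (hN : N ≠ 0) (hc : c ≠ 0) (hu : u ≠ c) {w : ℂ}
    (hw : w ^ N = u - c) : ∃ g ∈ rootBranches N c, w = g u := by
  have h0 : rootBranch N c 0 u ≠ 0 := by
    intro h
    have := rootBranch_pow hN hc 0 u
    rw [h, zero_pow hN] at this
    exact hu (sub_eq_zero.1 this.symm)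
  have hroot : (w / rootBranch N c 0 u) ^ N = 1 := by
    rw [div_pow, hw, rootBranch_pow hN hc, div_self (sub_ne_zero.2 hu)]
  have : NeZero N := ⟨hN⟩
  obtain ⟨j, hj, hζ⟩ := (isPrimitiveRoot_exp N hN).eq_pow_of_pow_eq_one hroot
  refine ⟨rootBranch N c j, Finset.mem_image_of_mem _ (Finset.mem_range.2 hj), ?_⟩
  rw [← div_mul_cancel₀ w h0, ← hζ, rootBranch, rootBranch, pow_zero, one_mul]
  ring

lemma norm_rootBranch_le (hN : N ≠ 0) (hc : c ≠ 0) (hR : 0 ≤ R) (hcR : ‖c‖ + R ≤ R ^ N)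
    (j : ℕ) (hu : ‖u‖ ≤ R) : ‖rootBranch N c j u‖ ≤ R := by
  refine le_of_pow_le_pow_left₀ hN hR ?_
  rw [← norm_pow, rootBranch_pow hN hc]
  linarith [norm_sub_le u c]

lemma hasDerivAt_rootBranch (hN : N ≠ 0) (hc : c ≠ 0) (hu : 1 - u / c ∈ slitPlane) (j : ℕ) :
    HasDerivAt (rootBranch N c j) (rootBranch N c j u / (N * (u - c))) u := by
  have hu0 : 1 - u / c ≠ 0 := slitPlane_ne_zero hu
  have hderiv := (((hasDerivAt_id u).div_const c).const_sub 1).cpow_const (c := (N⁻¹ : ℂ)) hu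
  refine (hderiv.const_mul (exp (2 * Real.pi * I / N) ^ j * (-c) ^ (N⁻¹ : ℂ))).congr_deriv ?_
  have hcu : c - u ≠ 0 := by
    rw [one_sub_div hc] at hu0
    exact (div_ne_zero_iff.1 hu0).1
  have huc : u - c ≠ 0 := sub_ne_zero.2 (sub_ne_zero.1 hcu).symm
  rw [rootBranch, id, cpow_sub _ _ hu0, cpow_one]
  generalize (1 - u / c) ^ (N⁻¹ : ℂ) = B
  rw [one_sub_div hc]
  field_simp
  ring

open Classical in
lemma mapsTo_of_mem_rootBranches (hN : N ≠ 0) (hR : 0 < R) (hc : 2 * R ≤ ‖c‖)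
    (hcR : ‖c‖ + R ≤ R ^ N) {g : ℂ → ℂ} (hg : g ∈ rootBranches N c) :
    MapsTo g (closedBall 0 R) (closedBall 0 R) := fun u hu => by
  obtain ⟨j, -, rfl⟩ := Finset.mem_image.1 hg
  have hc0 : c ≠ 0 := norm_pos_iff.1 (by linarith)
  rw [mem_closedBall_zero_iff] at hu ⊢
  exact norm_rootBranch_le hN hc0 hR.le hcR j hu

open Classical in
lemma lipschitzOnWith_of_mem_rootBranches (hN : N ≠ 0) (hR : 0 < R) (hc : 2 * R ≤ ‖c‖)
    (hcR : ‖c‖ + R ≤ R ^ N) {g : ℂ → ℂ} (hg : g ∈ rootBranches N c) :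
    LipschitzOnWith (N : ℝ≥0)⁻¹ g (closedBall 0 R) := by
  obtain ⟨j, -, rfl⟩ := Finset.mem_image.1 hg
  have hc0 : c ≠ 0 := norm_pos_iff.1 (by linarith)
  refine (convex_closedBall 0 R).lipschitzOnWith_of_nnnorm_hasDerivWithin_le
    (f' := fun u => rootBranch N c j u / (N * (u - c))) (fun u hu => ?_) (fun u hu => ?_)
  · rw [mem_closedBall_zero_iff] at hu
    have hslit : 1 - u / c ∈ slitPlane := by
      refine sub_eq_add_neg 1 (u / c) ▸ mem_slitPlane_of_norm_lt_one ?_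
      rw [norm_neg, norm_div, div_lt_one (by linarith)]
      linarith
    exact (hasDerivAt_rootBranch hN hc0 hslit j).hasDerivWithinAt
  · rw [mem_closedBall_zero_iff] at hu
    have hψ := norm_rootBranch_le hN hc0 hR.le hcR j hu
    have huc : R ≤ ‖u - c‖ := by
      rw [norm_sub_rev]
      linarith [norm_sub_norm_le c u]
    rw [← NNReal.coe_le_coe, coe_nnnorm, NNReal.coe_inv, NNReal.coe_natCast, norm_div, norm_mul,
      norm_natCast]
    calc ‖rootBranch N c j u‖ / (N * ‖u - c‖) ≤ R / (N * R) := by gcongr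
      _ = (N : ℝ)⁻¹ := by field_simp

end RootBranches

lemma add_two_lt_sq_of_sqrt_add_one_lt {x y : ℝ} (hx : 1 ≤ x) (h : √x + 1 < y) : x + 2 < y ^ 2 := by
  have hs : 1 ≤ √x := Real.one_le_sqrt.2 hx
  have hsq : √x ^ 2 = x := Real.sq_sqrt (by linarith)
  nlinarith

lemma tendsto_prod_range_nhds_zero {L : ℕ → ℝ≥0} {q : ℝ≥0} (hq : q < 1) (hL : ∀ i, L i ≤ q) :
    Tendsto (fun k => ∏ i ∈ Finset.range k, L i) atTop (𝓝 0) :=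
  tendsto_of_tendsto_of_tendsto_of_le_of_le tendsto_const_nhds
    (tendsto_pow_atTop_nhds_zero_of_lt_one q.2 hq) (fun _ => zero_le)
    fun k => (Finset.prod_le_pow_card _ _ _ fun i _ => hL i).trans_eq (by simp)

lemma Q_M_succ {c : ℕ → ℂ} {msq M : ℕ → ℕ} {P : ℕ → ℂ → ℂ} {Q : ℕ → ℕ → ℂ → ℂ}
    (hMs : ∀ k, M (k + 1) = M k + (msq (k + 1) + 1))
    (hP1 : ∀ k, 1 ≤ k → ∀ z, P (M k) z = z ^ 2 + c k)
    (hP2 : ∀ n, (∀ k, 1 ≤ k → M k ≠ n) → ∀ z, P n z = z ^ 2)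
    (hQs : ∀ a n z, a ≤ n → Q a (n + 1) z = P (n + 1) (Q a n z)) (k : ℕ) (z : ℂ) :
    Q 0 (M (k + 1)) z = Q 0 (M k) z ^ 2 ^ (msq (k + 1) + 1) + c (k + 1) := by
  have hM : StrictMono M := strictMono_nat_of_lt_succ fun k => by rw [hMs k]; omega
  have hsq : ∀ i ≤ msq (k + 1), Q 0 (M k + i) z = Q 0 (M k) z ^ 2 ^ i := by
    intro i
    induction i with
    | zero => simp
    | succ i ih =>
      intro hi
      have hfree : ∀ j, 1 ≤ j → M j ≠ M k + i + 1 := by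
        intro j _ hj
        have h1 : k < j := hM.lt_iff_lt.1 (by omega)
        have h2 : j < k + 1 := hM.lt_iff_lt.1 (by rw [hMs]; omega)
        omega
      rw [← add_assoc, hQs _ _ _ (Nat.zero_le _), hP2 _ hfree, ih (by omega), ← pow_mul,
        ← pow_succ]
  have hlast : M (k + 1) = M k + msq (k + 1) + 1 := by rw [hMs, add_assoc]
  rw [hlast, hQs _ _ _ (Nat.zero_le _), ← hlast, hP1 _ (Nat.le_add_left 1 k), hsq _ le_rfl,
    ← pow_mul, ← pow_succ]

theorem stmt_15_general
    (c : ℕ → ℂ) (msq : ℕ → ℕ)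
    (hc : ∀ k, 1 ≤ k → 4 < ‖c k‖)
    (hinv : ∀ k, 1 ≤ k → Real.sqrt (‖c k‖) + 1 < (2 : ℝ) ^ 2 ^ msq k)
    (M : ℕ → ℕ) (hM0 : M 0 = 0)
    (hMs : ∀ k, M (k + 1) = M k + (msq (k + 1) + 1))
    (P : ℕ → ℂ → ℂ)
    (hP1 : ∀ k, 1 ≤ k → ∀ z, P (M k) z = z ^ 2 + c k)
    (hP2 : ∀ n, (∀ k, 1 ≤ k → M k ≠ n) → ∀ z, P n z = z ^ 2)
    (Q : ℕ → ℕ → ℂ → ℂ)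
    (hQ0 : ∀ n z, Q n n z = z)
    (hQs : ∀ a n z, a ≤ n → Q a (n + 1) z = P (n + 1) (Q a n z))
    (S : ℕ → Set ℂ)
    (hS : ∀ k, S k = {z : ℂ | ‖Q 0 (M k) z‖ ≤ 2})
    (E : Set ℂ) (hE : E = ⋂ k, ⋂ (_ : 1 ≤ k), S k) :
    μH[1] E ≤ 4 := by
  set N : ℕ → ℕ := fun k => 2 ^ (msq k + 1)
  have hN : ∀ k, N k ≠ 0 := fun k => by positivity
  have hcN : ∀ k, 2 * 2 ≤ ‖c (k + 1)‖ := fun k => by linarith [hc (k + 1) k.succ_pos]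
  have hcR : ∀ k, ‖c (k + 1)‖ + 2 ≤ 2 ^ N (k + 1) := fun k => by
    have := add_two_lt_sq_of_sqrt_add_one_lt (by linarith [hcN k]) (hinv (k + 1) k.succ_pos)
    rw [← pow_mul, ← pow_succ] at this
    exact this.le
  have hEK : ∀ k, ∀ z ∈ E, Q 0 (M (k + 1)) z ∈ closedBall 0 2 := fun k z hz => by
    rw [hE, mem_iInter₂] at hz
    simpa [hS] using hz (k + 1) k.succ_pos
  have hbranch : ∀ k, ∀ z ∈ E, ∃ g ∈ rootBranches (N (k + 1)) (c (k + 1)),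
      Q 0 (M k) z = g (Q 0 (M (k + 1)) z) := fun k z hz => by
    have hu := mem_closedBall_zero_iff.1 (hEK k z hz)
    have huc : Q 0 (M (k + 1)) z ≠ c (k + 1) := fun h => by linarith [hcN k, h ▸ hu]
    refine exists_mem_rootBranches_eq (hN _) (norm_pos_iff.1 (by linarith [hcN k])) huc ?_
    rw [Q_M_succ hMs hP1 hP2 hQs, add_sub_cancel_right]
  calc μH[1] E ≤ ediam (closedBall (0 : ℂ) 2) ^ (1 : ℝ) :=
        hausdorffMeasure_le_ediam_rpow_of_branches isBounded_closedBall.ediam_ne_top zero_le_one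
          (fun k _ => mapsTo_of_mem_rootBranches (hN _) two_pos (hcN k) (hcR k))
          (fun k _ => lipschitzOnWith_of_mem_rootBranches (hN _) two_pos (hcN k) (hcR k))
          (fun k => by simpa using card_rootBranches_mul_inv_le_one)
          (tendsto_prod_range_nhds_zero (q := 2⁻¹) (by norm_num) fun k =>
            inv_anti₀ two_pos (by exact_mod_cast Nat.le_self_pow (Nat.succ_ne_zero _) 2))
          (fun z _ => by simp [hM0, hQ0]) hEK hbranch
    _ ≤ 4 := by
      rw [ENNReal.rpow_one, ← closedEBall_ofReal zero_le_two]
      exact ediam_closedEBall_le.trans (by norm_num)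

/-- The 1-dimensional Hausdorff measure of E = ⋂_{k≥1} S_k
satisfies H¹(E) ≤ 4. -/
theorem stmt_15
    (c : ℕ → ℂ) (msq : ℕ → ℕ)
    (hc : ∀ k, 1 ≤ k → 4 < ‖c k‖)
    (hmsq : ∀ k, 1 ≤ k → 1 ≤ msq k)
    (hinv : ∀ k, 1 ≤ k → Real.sqrt (‖c k‖) + 1 < (2 : ℝ) ^ 2 ^ msq k)
    (M : ℕ → ℕ) (hM0 : M 0 = 0)
    (hMs : ∀ k, M (k + 1) = M k + (msq (k + 1) + 1))
    (P : ℕ → ℂ → ℂ)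
    (hP1 : ∀ k, 1 ≤ k → ∀ z, P (M k) z = z ^ 2 + c k)
    (hP2 : ∀ n, (∀ k, 1 ≤ k → M k ≠ n) → ∀ z, P n z = z ^ 2)
    (Q : ℕ → ℕ → ℂ → ℂ)
    (hQ0 : ∀ n z, Q n n z = z)
    (hQs : ∀ a n z, a ≤ n → Q a (n + 1) z = P (n + 1) (Q a n z))
    (S : ℕ → Set ℂ)
    (hS : ∀ k, S k = {z : ℂ | ‖Q 0 (M k) z‖ ≤ 2})
    (E : Set ℂ) (hE : E = ⋂ k, ⋂ (_ : 1 ≤ k), S k) :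
    μH[1] E ≤ 4 :=
  stmt_15_general c msq hc hinv M hM0 hMs P hP1 hP2 Q hQ0 hQs S hS E hE
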